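/- Let μ = P_X ⊗ π_0 and ν = P_X ⊗ π_θ be joint probability measures on contexts and actions with ν ≪ μ and importance weight w = dν/dμ satisfying w ≤ w_m everywhere for some finite w_m. Let the reward function f take values in [−1, 0]. Then Var_μ(w·f) ≤ w_m·√(min(D(ν‖μ), D(μ‖ν))/2) + 1, where D denotes the KL divergence. -/

import Mathlib

/-!
Pointwise, `(w f)² ≤ w + w_m (w - 1)⁺` when `0 ≤ w ≤ w_m` and `|f| ≤ 1`; since `∫ w dμ = 1`,
integrating reduces the claim to Pinsker's inequality `∫ (w - 1)⁺ dμ ≤ √(D/2)`. The left side is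
half the `L¹` distance `∫ |dν/dμ - 1| dμ`, which is symmetric in `μ` and `ν` once they are
mutually absolutely continuous (as they are when `D(μ‖ν) < ∞`), so either divergence may be used.

Pinsker's inequality comes from `3 (x - 1)² / (2 (x + 2)) ≤ x log x - x + 1` combined with AM–GM,
`|x - 1| ≤ klFun x / s + s (x + 2) / 6` for every `s > 0`: integrating against `Q` gives
`T ≤ KL / s + s / 2` for `T = ∫ |dP/dQ - 1| dQ`, and `s = T` yields `T² ≤ 2 KL`.
-/

open MeasureTheory ProbabilityTheory Real
open scoped ENNReal Classical ProbabilityTheory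

noncomputable def klDiv {Z : Type*} [MeasurableSpace Z] (P Q : Measure Z) : ℝ≥0∞ :=
  if P ≪ Q ∧ Integrable (llr P Q) P then ENNReal.ofReal (∫ z, llr P Q z ∂P) else ⊤

theorem le_of_hasDerivAt_of_sub_mul_nonneg {f f' : ℝ → ℝ} {a c x : ℝ} (hc : a < c) (hx : a < x)
    (hf : ∀ y, a < y → HasDerivAt f (f' y) y) (hf' : ∀ y, a < y → 0 ≤ (y - c) * f' y) :
    f c ≤ f x := by
  have hcont : ContinuousOn f (Set.Ioi a) := fun y hy =>
    (hf y hy).continuousAt.continuousWithinAt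
  rcases le_total x c with hxc | hcx
  · refine antitoneOn_of_hasDerivWithinAt_nonpos (f' := f') (convex_Icc x c)
      (hcont.mono fun y hy => hx.trans_le hy.1) (fun y hy => ?_) (fun y hy => ?_)
      ⟨le_rfl, hxc⟩ ⟨hxc, le_rfl⟩ hxc <;> rw [interior_Icc] at hy
    · exact (hf y (hx.trans hy.1)).hasDerivWithinAt
    · exact nonpos_of_mul_nonneg_right (hf' y (hx.trans hy.1)) (by linarith [hy.2])
  · refine monotoneOn_of_hasDerivWithinAt_nonneg (f' := f') (convex_Icc c x)
      (hcont.mono fun y hy => hc.trans_le hy.1) (fun y hy => ?_) (fun y hy => ?_)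
      ⟨le_rfl, hcx⟩ ⟨hcx, le_rfl⟩ hcx <;> rw [interior_Icc] at hy
    · exact (hf y (hc.trans hy.1)).hasDerivWithinAt
    · exact nonneg_of_mul_nonneg_right (hf' y (hc.trans hy.1)) (by linarith [hy.1])

theorem sub_one_mul_log_sub_nonneg {y : ℝ} (hy : 0 < y) :
    0 ≤ (y - 1) * (log y - 2 * (y - 1) / (y + 1)) := by
  have hderiv : ∀ t, 0 < t → HasDerivAt (fun t => log t - 2 * (t - 1) / (t + 1))
      ((t - 1) ^ 2 / (t * (t + 1) ^ 2)) t := by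
    intro t ht
    have h := (hasDerivAt_log ht.ne').sub
      ((((hasDerivAt_id' t).sub_const 1).const_mul 2).div ((hasDerivAt_id' t).add_const 1)
        (by positivity))
    refine h.congr_deriv ?_
    field_simp
    ring
  have hmono : MonotoneOn (fun t => log t - 2 * (t - 1) / (t + 1)) (Set.Ioi 0) :=
    monotoneOn_of_hasDerivWithinAt_nonneg (convex_Ioi 0)
      (fun t ht => (hderiv t ht).continuousAt.continuousWithinAt)
      (fun t ht => by rw [interior_Ioi] at ht ⊢; exact (hderiv t ht).hasDerivWithinAt)
      (fun t ht => by rw [interior_Ioi] at ht; have : 0 < t := ht; positivity)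
  rcases le_total y 1 with h | h
  · have := hmono hy (Set.mem_Ioi.2 one_pos) h
    simp only [log_one] at this
    exact mul_nonneg_of_nonpos_of_nonpos (by linarith) (by linarith)
  · have := hmono (Set.mem_Ioi.2 one_pos) hy h
    simp only [log_one] at this
    exact mul_nonneg (by linarith) (by linarith)

section

variable {Z : Type*} [MeasurableSpace Z] {P Q : Measure Z}

namespace InformationTheory

theorem three_mul_sq_div_le_klFun {x : ℝ} (hx : 0 ≤ x) :
    3 * (x - 1) ^ 2 / (2 * (x + 2)) ≤ klFun x := by
  rcases hx.eq_or_lt with rfl | hx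
  · norm_num [klFun_zero]
  have hderiv : ∀ y, 0 < y → HasDerivAt (fun t => klFun t - 3 * (t - 1) ^ 2 / (2 * (t + 2)))
      (log y - 3 * (y - 1) * (y + 5) / (2 * (y + 2) ^ 2)) y := by
    intro y hy
    have h := (hasDerivAt_klFun hy.ne').sub
      ((((hasDerivAt_id' y).sub_const 1).pow 2 |>.const_mul 3).div
        (((hasDerivAt_id' y).add_const 2).const_mul 2) (by positivity))
    refine h.congr_deriv ?_
    simp only [Pi.pow_apply]
    field_simp
    ring
  have key := le_of_hasDerivAt_of_sub_mul_nonneg one_pos hx hderiv fun y hy => by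
    -- `log y - 2 (y - 1) / (y + 1)` and `2 (y - 1) / (y + 1) - 3 (y - 1) (y + 5) / (2 (y + 2)²)`
    -- both have the sign of `y - 1`
    have hsplit : (y - 1) * (log y - 3 * (y - 1) * (y + 5) / (2 * (y + 2) ^ 2))
        = (y - 1) * (log y - 2 * (y - 1) / (y + 1))
          + (y - 1) ^ 4 / (2 * (y + 1) * (y + 2) ^ 2) := by
      field_simp
      ring
    rw [hsplit]
    exact add_nonneg (sub_one_mul_log_sub_nonneg hy) (by positivity)
  linarith [klFun_one]

theorem abs_sub_one_le_klFun_div_add {x s : ℝ} (hx : 0 ≤ x) (hs : 0 < s) :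
    |x - 1| ≤ klFun x / s + s * (x + 2) / 6 := by
  calc |x - 1| ≤ 3 * (x - 1) ^ 2 / (2 * (x + 2)) / s + s * (x + 2) / 6 := by
        rw [div_div, div_add_div _ _ (by positivity) (by norm_num), le_div_iff₀ (by positivity)]
        nlinarith [sq_nonneg (3 * |x - 1| - s * (x + 2)), sq_abs (x - 1)]
    _ ≤ klFun x / s + s * (x + 2) / 6 := by gcongr; exact three_mul_sq_div_le_klFun hx

theorem sq_integral_abs_rnDeriv_sub_one_le [IsProbabilityMeasure P] [IsProbabilityMeasure Q]
    (hPQ : P ≪ Q) (hint : Integrable (llr P Q) P) :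
    (∫ z, |(P.rnDeriv Q z).toReal - 1| ∂Q) ^ 2 ≤ 2 * (InformationTheory.klDiv P Q).toReal := by
  set g : Z → ℝ := fun z => (P.rnDeriv Q z).toReal
  set T := ∫ z, |g z - 1| ∂Q
  set K := (InformationTheory.klDiv P Q).toReal
  have hg_int : Integrable g Q := Measure.integrable_toReal_rnDeriv
  have hg_one : ∫ z, g z ∂Q = 1 := by simp [g, Measure.integral_toReal_rnDeriv hPQ]
  have hklFun_int : Integrable (fun z => klFun (g z)) Q :=
    (integrable_klFun_rnDeriv_iff hPQ).2 hint
  have hbound : ∀ s, 0 < s → T ≤ K / s + s / 2 := by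
    intro s hs
    have hint_s : Integrable (fun z => s * (g z + 2) / 6) Q :=
      ((hg_int.add (integrable_const 2)).const_mul s).div_const 6
    calc T ≤ ∫ z, (klFun (g z) / s + s * (g z + 2) / 6) ∂Q :=
          integral_mono (hg_int.sub (integrable_const 1)).abs
            ((hklFun_int.div_const s).add hint_s)
            fun z => abs_sub_one_le_klFun_div_add ENNReal.toReal_nonneg hs
      _ = K / s + s / 2 := by
        rw [integral_add (hklFun_int.div_const s) hint_s, integral_div, integral_div,
          integral_const_mul, integral_add hg_int (integrable_const 2), hg_one,
          ← toReal_klDiv_eq_integral_klFun hPQ]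
        simp only [integral_const, probReal_univ, smul_eq_mul, one_mul]
        ring
  have hT0 : 0 ≤ T := integral_nonneg fun z => abs_nonneg (g z - 1)
  rcases hT0.eq_or_lt with hT | hT
  · rw [← hT, zero_pow two_ne_zero]
    exact mul_nonneg zero_le_two ENNReal.toReal_nonneg
  · have := hbound T hT
    rw [div_add' _ _ _ hT.ne', le_div_iff₀ hT] at this
    linarith

end InformationTheory

theorem integral_abs_rnDeriv_sub_one_comm [SigmaFinite P] [SigmaFinite Q] (hPQ : P ≪ Q)
    (hQP : Q ≪ P) :
    ∫ z, |(Q.rnDeriv P z).toReal - 1| ∂P = ∫ z, |(P.rnDeriv Q z).toReal - 1| ∂Q := by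
  rw [← integral_rnDeriv_smul hPQ]
  refine integral_congr_ae ?_
  filter_upwards [Measure.rnDeriv_pos' hQP, Measure.rnDeriv_lt_top P Q,
    Measure.inv_rnDeriv' hQP] with z hpos htop hinv
  have hx : 0 < (P.rnDeriv Q z).toReal := ENNReal.toReal_pos hpos.ne' htop.ne
  rw [← hinv, Pi.inv_apply, ENNReal.toReal_inv, smul_eq_mul]
  calc _ = |(P.rnDeriv Q z).toReal * ((P.rnDeriv Q z).toReal⁻¹ - 1)| := by
        rw [abs_mul, abs_of_pos hx]
    _ = _ := by rw [mul_sub, mul_inv_cancel₀ hx.ne', mul_one, abs_sub_comm]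

theorem klDiv_eq_informationTheory_klDiv [IsProbabilityMeasure P] [IsProbabilityMeasure Q] :
    klDiv P Q = InformationTheory.klDiv P Q := by
  by_cases h : P ≪ Q ∧ Integrable (llr P Q) P
  · rw [klDiv, if_pos h, InformationTheory.klDiv_of_ac_of_integrable h.1 h.2]
    simp
  · rw [klDiv, if_neg h, eq_comm, InformationTheory.klDiv_eq_top_iff]
    tauto

theorem sq_integral_abs_rnDeriv_sub_one_le_min_klDiv [IsProbabilityMeasure P]
    [IsProbabilityMeasure Q] (hPQ : P ≪ Q) (hfin : min (klDiv P Q) (klDiv Q P) ≠ ⊤) :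
    (∫ z, |(P.rnDeriv Q z).toReal - 1| ∂Q) ^ 2 ≤ 2 * (min (klDiv P Q) (klDiv Q P)).toReal := by
  rcases min_cases (klDiv P Q) (klDiv Q P) with ⟨hmin, -⟩ | ⟨hmin, -⟩ <;>
    rw [hmin, klDiv_eq_informationTheory_klDiv] at hfin ⊢ <;>
    obtain ⟨hac, hint⟩ := InformationTheory.klDiv_ne_top_iff.1 hfin
  · exact InformationTheory.sq_integral_abs_rnDeriv_sub_one_le hPQ hint
  · rw [← integral_abs_rnDeriv_sub_one_comm hPQ hac]
    exact InformationTheory.sq_integral_abs_rnDeriv_sub_one_le hac hint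

theorem two_mul_integral_max_rnDeriv_sub_one [IsProbabilityMeasure P] [IsProbabilityMeasure Q]
    (hPQ : P ≪ Q) :
    2 * ∫ z, max ((P.rnDeriv Q z).toReal - 1) 0 ∂Q = ∫ z, |(P.rnDeriv Q z).toReal - 1| ∂Q := by
  have hg : Integrable (fun z => (P.rnDeriv Q z).toReal - 1) Q :=
    Measure.integrable_toReal_rnDeriv.sub (integrable_const 1)
  have hmax : ∀ a : ℝ, 2 * max a 0 = a + |a| := fun a => by
    rcases le_total a 0 with h | h
    · rw [max_eq_right h, abs_of_nonpos h]; ring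
    · rw [max_eq_left h, abs_of_nonneg h]; ring
  rw [← integral_const_mul]
  simp only [hmax]
  rw [integral_add hg hg.abs, integral_sub Measure.integrable_toReal_rnDeriv (integrable_const 1),
    Measure.integral_toReal_rnDeriv hPQ]
  simp

theorem integral_max_rnDeriv_sub_one_le_sqrt_min_klDiv [IsProbabilityMeasure P]
    [IsProbabilityMeasure Q] (hPQ : P ≪ Q) (hfin : min (klDiv P Q) (klDiv Q P) ≠ ⊤) :
    ∫ z, max ((P.rnDeriv Q z).toReal - 1) 0 ∂Q
      ≤ √((min (klDiv P Q) (klDiv Q P)).toReal / 2) := by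
  have hnonneg : 0 ≤ ∫ z, max ((P.rnDeriv Q z).toReal - 1) 0 ∂Q :=
    integral_nonneg fun z => le_max_right _ _
  rw [Real.le_sqrt hnonneg (by positivity)]
  have := sq_integral_abs_rnDeriv_sub_one_le_min_klDiv hPQ hfin
  rw [← two_mul_integral_max_rnDeriv_sub_one hPQ] at this
  linarith

theorem one_le_of_rnDeriv_le_ofReal [IsProbabilityMeasure P] [IsProbabilityMeasure Q]
    (hPQ : P ≪ Q) {c : ℝ} (hc : ∀ᵐ z ∂Q, P.rnDeriv Q z ≤ ENNReal.ofReal c) : 1 ≤ c := by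
  rw [← ENNReal.one_le_ofReal, ← measure_univ (μ := P), ← Measure.lintegral_rnDeriv hPQ]
  calc ∫⁻ z, P.rnDeriv Q z ∂Q ≤ ∫⁻ _, ENNReal.ofReal c ∂Q := lintegral_mono_ae hc
    _ = ENNReal.ofReal c := by simp

theorem sq_mul_le_add_mul_max_sub_one {w f m : ℝ} (hw : 0 ≤ w) (hwm : w ≤ m) (hf : f ^ 2 ≤ 1) :
    (w * f) ^ 2 ≤ w + m * max (w - 1) 0 := by
  have hsq : (w * f) ^ 2 ≤ w ^ 2 := by nlinarith [sq_nonneg w]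
  rcases le_total w 1 with h | h
  · rw [max_eq_right (by linarith)]
    nlinarith
  · rw [max_eq_left (by linarith)]
    nlinarith

end

theorem stmt_6_general {X A : Type*} [MeasurableSpace X] [MeasurableSpace A]
    (PX : Measure X) [IsProbabilityMeasure PX]
    (π0 πθ : Kernel X A) [IsMarkovKernel π0] [IsMarkovKernel πθ]
    (f : X × A → ℝ)
    (hfb : ∀ p, f p ∈ Set.Icc (-1 : ℝ) 0)
    (μ ν : Measure (X × A)) (hμ : μ = PX ⊗ₘ π0) (hν : ν = PX ⊗ₘ πθ)
    (hac : ν ≪ μ)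
    (w : X × A → ℝ) (hw : w = fun p => (ν.rnDeriv μ p).toReal)
    (w_m : ℝ) (hwm : ∀ p, ν.rnDeriv μ p ≤ ENNReal.ofReal w_m)
    (hfin : min (klDiv ν μ) (klDiv μ ν) ≠ ⊤) :
    (∫ p, (w p * f p) ^ 2 ∂μ) - (∫ p, w p * f p ∂μ) ^ 2
      ≤ w_m * Real.sqrt ((min (klDiv ν μ) (klDiv μ ν)).toReal / 2) + 1 := by
  have : IsProbabilityMeasure μ := hμ ▸ inferInstance
  have : IsProbabilityMeasure ν := hν ▸ inferInstance
  have hwm_nonneg : 0 ≤ w_m := zero_le_one.trans (one_le_of_rnDeriv_le_ofReal hac (ae_of_all _ hwm))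
  have hw_int : Integrable w μ := hw ▸ Measure.integrable_toReal_rnDeriv
  have hw_one : ∫ p, w p ∂μ = 1 := by simp [hw, Measure.integral_toReal_rnDeriv hac]
  have hmax_int : Integrable (fun p => w_m * max (w p - 1) 0) μ :=
    ((hw_int.sub (integrable_const 1)).pos_part).const_mul w_m
  have hpointwise : ∀ p, (w p * f p) ^ 2 ≤ w p + w_m * max (w p - 1) 0 := fun p =>
    sq_mul_le_add_mul_max_sub_one (by simp [hw])
      (hw ▸ ENNReal.toReal_le_of_le_ofReal hwm_nonneg (hwm p))
      (by nlinarith [(hfb p).1, (hfb p).2])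
  have hTV : ∫ p, max (w p - 1) 0 ∂μ ≤ √((min (klDiv ν μ) (klDiv μ ν)).toReal / 2) := by
    simpa only [hw] using integral_max_rnDeriv_sub_one_le_sqrt_min_klDiv hac hfin
  calc _ ≤ ∫ p, (w p * f p) ^ 2 ∂μ := sub_le_self _ (sq_nonneg _)
    _ ≤ ∫ p, (w p + w_m * max (w p - 1) 0) ∂μ :=
      integral_mono_of_nonneg (ae_of_all _ fun p => sq_nonneg _) (hw_int.add hmax_int)
        (ae_of_all _ hpointwise)
    _ = w_m * ∫ p, max (w p - 1) 0 ∂μ + 1 := by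
      rw [integral_add hw_int hmax_int, integral_const_mul, hw_one, add_comm]
    _ ≤ _ := by gcongr

/-- Let `μ = P_X ⊗ π₀`, `ν = P_X ⊗ π_θ` with `ν ≪ μ` and importance weight
`w = dν/dμ ≤ w_m` everywhere. If the reward `f` takes values in `[−1,0]`, then
`Var_μ(w·f) ≤ w_m·√(min(D(ν‖μ), D(μ‖ν))/2) + 1`.
(When both divergences are `∞` the claim is vacuous, captured by the finiteness hypothesis.) -/
theorem stmt_6 {X A : Type*} [MeasurableSpace X] [MeasurableSpace A]
    (PX : Measure X) [IsProbabilityMeasure PX]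
    (π0 πθ : Kernel X A) [IsMarkovKernel π0] [IsMarkovKernel πθ]
    (f : X × A → ℝ) (hf : Measurable f)
    (hfb : ∀ p, f p ∈ Set.Icc (-1 : ℝ) 0)
    (μ ν : Measure (X × A)) (hμ : μ = PX ⊗ₘ π0) (hν : ν = PX ⊗ₘ πθ)
    (hac : ν ≪ μ)
    (w : X × A → ℝ) (hw : w = fun p => (ν.rnDeriv μ p).toReal)
    (w_m : ℝ) (hwm : ∀ p, ν.rnDeriv μ p ≤ ENNReal.ofReal w_m)
    (hfin : min (klDiv ν μ) (klDiv μ ν) ≠ ⊤) :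
    (∫ p, (w p * f p) ^ 2 ∂μ) - (∫ p, w p * f p ∂μ) ^ 2
      ≤ w_m * Real.sqrt ((min (klDiv ν μ) (klDiv μ ν)).toReal / 2) + 1 :=
  stmt_6_general PX π0 πθ f hfb μ ν hμ hν hac w hw w_m hwm hfin
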